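/- For each integer n ≥ 2 and all r ∈ (0,1), h_n'(r) = (2^{n+1}/r) ∫₀^r s(-log s)^{n-1} ds; in particular h_n'(r) > 0, so h_n is strictly increasing on (0,1). -/

import Mathlib

/-!
Let `x = -2 log r` and `truncExp m x = ∑_{j ≤ m} (m!/j!) x^j`, whose derivative is
`truncExp m x - x^m`. Differentiating `r² F(x)` in `r` gives `2r (F - F')(x)`; hence
`h_{m+1}(r) = r² (truncExp (m+1) x - x · truncExp m x)` has derivative `2r · truncExp m x`, and
`r² truncExp m x / 2^{m+1}` is an antiderivative of `r (-log r)^m` vanishing at `0`.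
For `0 < r < 1` we have `x > 0`, so `truncExp m x > 0`.
-/

/-- The coefficients `a_{n,k} = (-2)^k (n!/k! - (n-1)!/(k-1)!)` for `k ≥ 1`, `a_{n,0} = n!`. -/
noncomputable def coefA (n k : ℕ) : ℝ :=
  if k = 0 then (n.factorial : ℝ)
  else (-2 : ℝ) ^ k * ((n.factorial : ℝ) / (k.factorial : ℝ)
    - ((n - 1).factorial : ℝ) / ((k - 1).factorial : ℝ))

/-- `h_n(r) = r²(a_{n,n-1} log^{n-1} r + ⋯ + a_{n,1} log r + a_{n,0})`. -/
noncomputable def hFun (n : ℕ) (r : ℝ) : ℝ :=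
  r ^ 2 * ∑ k ∈ Finset.range n, coefA n k * (Real.log r) ^ k

open Real Filter Set Finset Topology

noncomputable def truncExp (m : ℕ) (x : ℝ) : ℝ :=
  ∑ j ∈ range (m + 1), (m.factorial / j.factorial : ℝ) * x ^ j

lemma truncExp_zero (x : ℝ) : truncExp 0 x = 1 := by simp [truncExp]

lemma truncExp_succ (m : ℕ) (x : ℝ) :
    truncExp (m + 1) x = x ^ (m + 1) + (m + 1) * truncExp m x := by
  rw [truncExp, sum_range_succ, truncExp, mul_sum, div_self (by positivity), one_mul, add_comm]
  congr 1
  refine sum_congr rfl fun j _ => ?_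
  rw [Nat.factorial_succ]
  push_cast
  ring

lemma hasDerivAt_truncExp (m : ℕ) (x : ℝ) :
    HasDerivAt (truncExp m) (truncExp m x - x ^ m) x := by
  induction m with
  | zero => simpa [funext truncExp_zero] using hasDerivAt_const x (1 : ℝ)
  | succ m ih =>
    have h := (hasDerivAt_pow (m + 1) x).fun_add (ih.const_mul ((m : ℝ) + 1))
    rw [funext (truncExp_succ m)]
    refine h.congr_deriv ?_
    push_cast
    ring

lemma truncExp_pos (m : ℕ) {x : ℝ} (hx : 0 ≤ x) : 0 < truncExp m x := by
  induction m with
  | zero => simp [truncExp_zero]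
  | succ m ih => rw [truncExp_succ]; positivity

lemma tendsto_truncExp_mul_exp_neg_atTop (m : ℕ) :
    Tendsto (fun t => truncExp m t * exp (-t)) atTop (𝓝 0) := by
  have h := tendsto_finsetSum (range (m + 1)) fun j _ =>
    (tendsto_pow_mul_exp_neg_atTop_nhds_zero j).const_mul (m.factorial / j.factorial : ℝ)
  simp only [mul_zero, sum_const_zero] at h
  refine h.congr fun t => ?_
  simp only [truncExp, sum_mul, mul_assoc]

lemma tendsto_sq_mul_truncExp_neg_two_mul_log_nhdsGT_zero (m : ℕ) :
    Tendsto (fun s => s ^ 2 * truncExp m (-2 * log s)) (𝓝[>] 0) (𝓝 0) := by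
  have hx : Tendsto (fun s => -2 * log s) (𝓝[>] 0) atTop :=
    tendsto_log_nhdsGT_zero.const_mul_atBot_of_neg (by norm_num)
  refine ((tendsto_truncExp_mul_exp_neg_atTop m).comp hx).congr' ?_
  filter_upwards [self_mem_nhdsWithin] with s (hs : 0 < s)
  rw [Function.comp_apply, show -(-2 * log s) = log (s ^ 2) by rw [log_pow]; push_cast; ring,
    exp_log (by positivity), mul_comm]

lemma tendsto_mul_neg_log_pow_nhdsGT_zero (m : ℕ) :
    Tendsto (fun s => s * (-log s) ^ m) (𝓝[>] 0) (𝓝 0) := by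
  refine ((tendsto_pow_mul_exp_neg_atTop_nhds_zero m).comp
    (tendsto_neg_atBot_atTop.comp tendsto_log_nhdsGT_zero)).congr' ?_
  filter_upwards [self_mem_nhdsWithin] with s (hs : 0 < s)
  simp [exp_log hs, mul_comm]

lemma continuousOn_Ici_zero_of_tendsto {f : ℝ → ℝ} (hpos : ∀ x, 0 < x → ContinuousAt f x)
    (h0 : Tendsto f (𝓝[>] 0) (𝓝 (f 0))) : ContinuousOn f (Ici 0) := by
  intro x hx
  rcases (mem_Ici.mp hx).eq_or_lt with rfl | hx
  · exact continuousWithinAt_Ioi_iff_Ici.mp h0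
  · exact (hpos x hx).continuousWithinAt

lemma hasDerivAt_sq_mul_comp_neg_two_log {F : ℝ → ℝ} {F' r : ℝ} (hr : 0 < r)
    (hF : HasDerivAt F F' (-2 * log r)) :
    HasDerivAt (fun s => s ^ 2 * F (-2 * log s)) (2 * r * (F (-2 * log r) - F')) r := by
  have h := (hasDerivAt_pow 2 r).fun_mul (hF.comp r ((hasDerivAt_log hr.ne').const_mul (-2)))
  refine h.congr_deriv ?_
  simp only [Function.comp_apply]
  field_simp
  ring

lemma sum_coefA_mul_pow (m : ℕ) (L : ℝ) :
    ∑ k ∈ range (m + 1), coefA (m + 1) k * L ^ k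
      = truncExp (m + 1) (-2 * L) - (-2 * L) * truncExp m (-2 * L) := by
  set x := -2 * L
  have hterm (k : ℕ) : coefA (m + 1) (k + 1) * L ^ (k + 1)
      = ((m + 1).factorial / (k + 1).factorial : ℝ) * x ^ (k + 1)
        - x * ((m.factorial / k.factorial : ℝ) * x ^ k) := by
    simp only [coefA, if_neg k.succ_ne_zero, Nat.add_sub_cancel, x]
    ring
  rw [sum_range_succ', sum_congr rfl fun k _ => hterm k, sum_sub_distrib, ← mul_sum, truncExp,
    sum_range_succ', sum_range_succ, truncExp, sum_range_succ]
  field_simp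
  simp only [coefA, ↓reduceIte, Nat.factorial_zero, Nat.cast_one, mul_one]
  ring

lemma hasDerivAt_hFun (m : ℕ) {r : ℝ} (hr : 0 < r) :
    HasDerivAt (hFun (m + 1)) (2 * r * truncExp m (-2 * log r)) r := by
  set F := fun x => truncExp (m + 1) x - x * truncExp m x
  have hF (x : ℝ) : HasDerivAt F
      ((truncExp (m + 1) x - x ^ (m + 1)) - (1 * truncExp m x + x * (truncExp m x - x ^ m))) x :=
    (hasDerivAt_truncExp (m + 1) x).sub ((hasDerivAt_id x).mul (hasDerivAt_truncExp m x))
  have hfun : hFun (m + 1) = fun s => s ^ 2 * F (-2 * log s) := by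
    funext s
    rw [hFun, sum_coefA_mul_pow]
  rw [hfun]
  convert hasDerivAt_sq_mul_comp_neg_two_log hr (hF _) using 2
  simp only [F, truncExp_succ]
  ring

lemma integral_mul_neg_log_pow (m : ℕ) {r : ℝ} (hr : 0 ≤ r) :
    ∫ s in (0 : ℝ)..r, s * (-log s) ^ m = r ^ 2 * truncExp m (-2 * log r) / 2 ^ (m + 1) := by
  set G := fun s => s ^ 2 * truncExp m (-2 * log s) / 2 ^ (m + 1)
  have hG (s : ℝ) (hs : 0 < s) : HasDerivAt G (s * (-log s) ^ m) s := by
    refine ((hasDerivAt_sq_mul_comp_neg_two_log hs (hasDerivAt_truncExp m _)).div_const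
      (2 ^ (m + 1))).congr_deriv ?_
    rw [show -2 * log s = 2 * -log s by ring, mul_pow, pow_succ]
    field_simp
    ring
  have hGcont : ContinuousOn G (Ici 0) :=
    continuousOn_Ici_zero_of_tendsto (fun x hx => (hG x hx).continuousAt)
      (by simpa [G] using (tendsto_sq_mul_truncExp_neg_two_mul_log_nhdsGT_zero m).div_const _)
  have hfcont : ContinuousOn (fun s => s * (-log s) ^ m) (Ici 0) :=
    continuousOn_Ici_zero_of_tendsto (fun x hx => by fun_prop (disch := positivity))
      (by simpa using tendsto_mul_neg_log_pow_nhdsGT_zero m)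
  rw [intervalIntegral.integral_eq_sub_of_hasDerivAt_of_le hr (hGcont.mono Icc_subset_Ici_self)
    (fun x hx => hG x hx.1) ((hfcont.mono Icc_subset_Ici_self).intervalIntegrable_of_Icc hr)]
  simp [G]

/-- `h_n'(r) = (2^{n+1}/r) ∫₀^r s(-log s)^{n-1} ds > 0` on `(0,1)`, so `h_n` is strictly
increasing on `(0,1)`. -/
theorem hFun_deriv_pos (n : ℕ) (hn : 2 ≤ n) :
    (∀ r ∈ Set.Ioo (0 : ℝ) 1,
      deriv (hFun n) r = (2 ^ (n + 1) / r) * ∫ s in (0 : ℝ)..r, s * (-Real.log s) ^ (n - 1) ∧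
      0 < deriv (hFun n) r) ∧
    StrictMonoOn (hFun n) (Set.Ioo 0 1) := by
  obtain ⟨m, rfl⟩ : ∃ m, n = m + 1 := ⟨n - 1, by omega⟩
  have hderiv (r : ℝ) (hr : r ∈ Ioo (0 : ℝ) 1) :
      deriv (hFun (m + 1)) r = 2 * r * truncExp m (-2 * log r) :=
    (hasDerivAt_hFun m hr.1).deriv
  have hpos (r : ℝ) (hr : r ∈ Ioo (0 : ℝ) 1) : 0 < deriv (hFun (m + 1)) r := by
    have := truncExp_pos m (x := -2 * log r) (by linarith [log_neg hr.1 hr.2])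
    rw [hderiv r hr]
    exact mul_pos (mul_pos two_pos hr.1) this
  refine ⟨fun r hr => ⟨?_, hpos r hr⟩, ?_⟩
  · rw [hderiv r hr, Nat.add_sub_cancel, integral_mul_neg_log_pow m hr.1.le]
    field_simp
    ring
  · refine strictMonoOn_of_deriv_pos (convex_Ioo 0 1)
      (fun x hx => (hasDerivAt_hFun m hx.1).continuousAt.continuousWithinAt) ?_
    simpa only [interior_Ioo] using hpos
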